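/- Let μ be a finite Borel measure on ℝ^d and θ ∈ (0,1]. Then dim_F^θ μ ≥ F̲_μ(θ), where F̲_μ(θ) = liminf_{R→∞} θ·log(R^{−d} ∫_{|z|≤R} |μ̂(z)|^{2/θ} dz)/(−log R). -/

import Mathlib

open MeasureTheory Filter Set
open scoped ENNReal NNReal

noncomputable section

abbrev Ed (d : ℕ) := EuclideanSpace ℝ (Fin d)

noncomputable def ftm {d : ℕ} (μ : Measure (Ed d)) (z : Ed d) : ℂ :=
  ∫ x, Complex.exp (Complex.I * (-2 * Real.pi * (inner ℝ z x : ℝ))) ∂μ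

noncomputable def energyJ {d : ℕ} (μ : Measure (Ed d)) (s θ : ℝ) : ℝ≥0∞ :=
  if θ = 0 then ⨆ z : Ed d, ENNReal.ofReal (‖ftm μ z‖ ^ 2 * ‖z‖ ^ s)
  else (∫⁻ z : Ed d, ENNReal.ofReal (‖ftm μ z‖ ^ (2 / θ) * ‖z‖ ^ (s / θ - d))) ^ θ

noncomputable def dimF {d : ℕ} (μ : Measure (Ed d)) (θ : ℝ) : ℝ≥0∞ :=
  ⨆ (s : NNReal) (_ : energyJ μ s θ < ⊤), (s : ℝ≥0∞)

def sptm {d : ℕ} (μ : Measure (Ed d)) : Set (Ed d) := {x | ∀ r > 0, 0 < μ (Metric.ball x r)}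

noncomputable def dimFS {d : ℕ} (X : Set (Ed d)) (θ : ℝ) : ℝ≥0∞ :=
  ⨆ (μ : Measure (Ed d)) (_ : IsFiniteMeasure μ) (_ : μ ≠ 0) (_ : sptm μ ⊆ X),
    min (dimF μ θ) (d : ℝ≥0∞)

/-- The lower average Fourier dimension
`F̲_μ(θ) = liminf_{R→∞} θ·log(R^{−d} ∫_{|z|≤R} |μ̂(z)|^{2/θ} dz)/(−log R)`. -/
noncomputable def lowerAvgFourierDim {d : ℕ} (μ : Measure (Ed d)) (θ : ℝ) : ℝ :=
  Filter.liminf (fun R : ℝ =>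
    θ * Real.log (R ^ (-(d : ℝ)) *
      (∫⁻ z in {z : Ed d | ‖z‖ ≤ R},
        ENNReal.ofReal (‖ftm μ z‖ ^ (2 / θ))).toReal) / (-Real.log R))
    Filter.atTop

/-!
If `F̲_μ(θ) > t > s`, then for all large `R` the ball integral `S(R) = ∫_{|z|≤R} |μ̂|^{2/θ}` is at
most `R^{d - t/θ}`. On the annulus `r/2 ≤ |z| ≤ r` the weight `|z|^{s/θ-d}` is comparable to
`r^{s/θ-d}`, so that annulus contributes `≲ r^{s/θ-d} S(r)` to the energy. For large `r` this is
`≲ r^{(s-t)/θ}`, and for small `r` it is `≲ r^{s/θ}` because `|μ̂| ≤ μ(ℝ^d)`; over dyadic radii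
both are convergent geometric series, so `J_{s,θ}(μ) < ∞` and `dim_F^θ μ ≥ s`.
-/

open Metric

lemma lintegral_iUnion_lt_top_of_le_geometric {α : Type*} [MeasurableSpace α] {ν : Measure α}
    {s : ℕ → Set α} {f : α → ℝ≥0∞} {K q : ℝ≥0∞} (hK : K ≠ ⊤) (hq : q < 1)
    (h : ∀ k, ∫⁻ x in s k, f x ∂ν ≤ K * q ^ k) :
    ∫⁻ x in ⋃ k, s k, f x ∂ν < ⊤ :=
  calc ∫⁻ x in ⋃ k, s k, f x ∂ν ≤ ∑' k, ∫⁻ x in s k, f x ∂ν := lintegral_iUnion_le _ _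
    _ ≤ ∑' k, K * q ^ k := ENNReal.tsum_le_tsum h
    _ = K * (1 - q)⁻¹ := by rw [ENNReal.tsum_mul_left, ENNReal.tsum_geometric]
    _ < ⊤ := ENNReal.mul_lt_top hK.lt_top (ENNReal.inv_lt_top.2 (tsub_pos_iff_lt.2 hq))

lemma rpow_le_two_rpow_abs_mul_rpow {x r : ℝ} (a : ℝ) (hr : 0 < r) (hx₁ : r / 2 ≤ x)
    (hx₂ : x ≤ r) : x ^ a ≤ 2 ^ |a| * r ^ a := by
  have hx : 0 < x := by linarith
  rcases le_or_gt 0 a with ha | ha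
  · calc x ^ a ≤ r ^ a := Real.rpow_le_rpow hx.le hx₂ ha
      _ ≤ 2 ^ |a| * r ^ a :=
        le_mul_of_one_le_left (by positivity) (Real.one_le_rpow one_le_two (abs_nonneg a))
  · calc x ^ a ≤ (r / 2) ^ a := Real.rpow_le_rpow_of_nonpos (by positivity) hx₁ ha.le
      _ = 2 ^ |a| * r ^ a := by
        rw [Real.div_rpow hr.le zero_le_two, abs_of_neg ha, Real.rpow_neg zero_le_two]
        ring

lemma univ_subset_annuli {E : Type*} [NormedAddCommGroup E] {R : ℝ} (hR : 0 < R) :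
    (univ : Set E) ⊆ {0} ∪ (⋃ k : ℕ, closedBall 0 (R * (1 / 2) ^ k) \ ball 0 (R * (1 / 2) ^ k / 2))
      ∪ ⋃ k : ℕ, closedBall 0 (2 * R * 2 ^ k) \ ball 0 (2 * R * 2 ^ k / 2) := by
  intro z _
  rcases eq_or_ne z 0 with rfl | hz
  · exact Or.inl (Or.inl rfl)
  have hz0 : 0 < ‖z‖ := norm_pos_iff.2 hz
  simp only [mem_union, mem_iUnion, Set.mem_sdiff, mem_closedBall_zero_iff, mem_ball_zero_iff,
    not_lt]
  rcases le_or_gt ‖z‖ R with hzR | hRz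
  · obtain ⟨n, hn₁, hn₂⟩ := exists_nat_pow_near_of_lt_one (div_pos hz0 hR)
      ((div_le_one hR).2 hzR) one_half_pos one_half_lt_one
    rw [lt_div_iff₀ hR, pow_succ] at hn₁
    rw [div_le_iff₀ hR] at hn₂
    exact Or.inl (Or.inr ⟨n, by linarith, by linarith⟩)
  · obtain ⟨n, hn₁, hn₂⟩ := exists_nat_pow_near ((one_le_div hR).2 hRz.le) one_lt_two
    rw [le_div_iff₀ hR] at hn₁
    rw [div_lt_iff₀ hR, pow_succ] at hn₂
    exact Or.inr ⟨n, by linarith, by linarith⟩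

section Annuli

variable {E : Type*} [NormedAddCommGroup E] [MeasurableSpace E] [BorelSpace E]
  {ν : Measure E} {g : E → ℝ≥0∞}

lemma setLIntegral_annulus_mul_rpow_le (a : ℝ) {r : ℝ} (hr : 0 < r) :
    ∫⁻ z in closedBall 0 r \ ball 0 (r / 2), g z * ENNReal.ofReal (‖z‖ ^ a) ∂ν ≤
      ENNReal.ofReal (2 ^ |a| * r ^ a) * ∫⁻ z in closedBall 0 r, g z ∂ν :=
  calc ∫⁻ z in closedBall 0 r \ ball 0 (r / 2), g z * ENNReal.ofReal (‖z‖ ^ a) ∂ν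
      ≤ ∫⁻ z in closedBall 0 r \ ball 0 (r / 2), ENNReal.ofReal (2 ^ |a| * r ^ a) * g z ∂ν := by
        refine setLIntegral_mono' (measurableSet_closedBall.diff measurableSet_ball)
          fun z hz => ?_
        simp only [Set.mem_sdiff, mem_closedBall_zero_iff, mem_ball_zero_iff, not_lt] at hz
        rw [mul_comm]
        gcongr
        exact rpow_le_two_rpow_abs_mul_rpow a hr hz.2 hz.1
    _ = ENNReal.ofReal (2 ^ |a| * r ^ a) * ∫⁻ z in closedBall 0 r \ ball 0 (r / 2), g z ∂ν :=
        lintegral_const_mul' _ _ ENNReal.ofReal_ne_top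
    _ ≤ _ := by gcongr; exact sdiff_subset

lemma lintegral_iUnion_annulus_mul_rpow_lt_top {R l a c : ℝ} {C : ℝ≥0∞} (hC : C ≠ ⊤)
    (hR : 0 < R) (hl : 0 < l) (hlac : l ^ (a + c) < 1)
    (hg : ∀ k : ℕ, ∫⁻ z in closedBall 0 (R * l ^ k), g z ∂ν ≤
      C * ENNReal.ofReal ((R * l ^ k) ^ c)) :
    ∫⁻ z in ⋃ k : ℕ, closedBall 0 (R * l ^ k) \ ball 0 (R * l ^ k / 2),
      g z * ENNReal.ofReal (‖z‖ ^ a) ∂ν < ⊤ := by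
  refine lintegral_iUnion_lt_top_of_le_geometric (K := C * ENNReal.ofReal (2 ^ |a| * R ^ (a + c)))
    (ENNReal.mul_ne_top hC ENNReal.ofReal_ne_top) (ENNReal.ofReal_lt_one.2 hlac) fun k => ?_
  have hρ : 0 < R * l ^ k := by positivity
  calc _ ≤ ENNReal.ofReal (2 ^ |a| * (R * l ^ k) ^ a) * (C * ENNReal.ofReal ((R * l ^ k) ^ c)) :=
        (setLIntegral_annulus_mul_rpow_le a hρ).trans (by gcongr; exact hg k)
    _ = C * ENNReal.ofReal (2 ^ |a| * R ^ (a + c)) * ENNReal.ofReal (l ^ (a + c)) ^ k := by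
        rw [← ENNReal.ofReal_pow (by positivity), mul_left_comm, mul_assoc C,
          ← ENNReal.ofReal_mul (by positivity), ← ENNReal.ofReal_mul (by positivity),
          mul_assoc, ← Real.rpow_add hρ, Real.mul_rpow hR.le (by positivity),
          ← Real.rpow_pow_comm hl.le]
        ring_nf

theorem lintegral_mul_norm_rpow_lt_top [IsFiniteMeasureOnCompacts ν] {a c₀ c₁ R : ℝ}
    {C₀ C₁ : ℝ≥0∞} (hC₀ : C₀ ≠ ⊤) (hC₁ : C₁ ≠ ⊤) (hR : 0 < R) (hac₀ : 0 < a + c₀)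
    (hac₁ : a + c₁ < 0) (hg0 : g 0 ≠ ⊤)
    (hg₀ : ∀ r, 0 < r → r ≤ R → ∫⁻ z in closedBall 0 r, g z ∂ν ≤ C₀ * ENNReal.ofReal (r ^ c₀))
    (hg₁ : ∀ r, R ≤ r → ∫⁻ z in closedBall 0 r, g z ∂ν ≤ C₁ * ENNReal.ofReal (r ^ c₁)) :
    ∫⁻ z, g z * ENNReal.ofReal (‖z‖ ^ a) ∂ν < ⊤ := by
  have h_zero : ∫⁻ z in {0}, g z * ENNReal.ofReal (‖z‖ ^ a) ∂ν < ⊤ := by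
    rw [lintegral_singleton]
    exact ENNReal.mul_lt_top (ENNReal.mul_lt_top hg0.lt_top ENNReal.ofReal_lt_top)
      isCompact_singleton.measure_lt_top
  have h_inner := lintegral_iUnion_annulus_mul_rpow_lt_top hC₀ hR one_half_pos
    (Real.rpow_lt_one one_half_pos.le one_half_lt_one hac₀) fun k =>
      hg₀ _ (by positivity)
        (mul_le_of_le_one_right hR.le (pow_le_one₀ one_half_pos.le one_half_lt_one.le))
  have h_outer := lintegral_iUnion_annulus_mul_rpow_lt_top hC₁ (by positivity : 0 < 2 * R)
    two_pos (Real.rpow_lt_one_of_one_lt_of_neg one_lt_two hac₁) fun k =>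
      hg₁ _ ((by linarith : R ≤ 2 * R).trans
        (le_mul_of_one_le_right (by positivity) (one_le_pow₀ one_le_two)))
  rw [← setLIntegral_univ]
  refine (lintegral_mono_set (univ_subset_annuli hR)).trans_lt
    ((lintegral_union_le _ _ _).trans_lt (ENNReal.add_lt_top.2 ⟨?_, h_outer⟩))
  exact (lintegral_union_le _ _ _).trans_lt (ENNReal.add_lt_top.2 ⟨h_zero, h_inner⟩)

end Annuli

-- In `ℝ` a liminf that is not bounded below takes the junk value `0`.
lemma eventually_lt_of_nonneg_lt_liminf {α : Type*} {f : Filter α} {u : α → ℝ} {t : ℝ}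
    (ht : 0 ≤ t) (h : t < liminf u f) : ∀ᶠ x in f, t < u x := by
  by_cases hu : f.IsBoundedUnder (· ≥ ·) u
  · exact eventually_lt_of_lt_liminf h hu
  · rw [Real.liminf_of_not_isBoundedUnder hu] at h
    linarith

lemma le_ofReal_rpow_of_lt_mul_log_div_neg_log {S : ℝ≥0∞} {θ t R D : ℝ} (hθ : 0 < θ)
    (ht : 0 < t) (hR : 1 < R) (h : t < θ * Real.log (R ^ (-D) * S.toReal) / (-Real.log R)) :
    S ≤ ENNReal.ofReal (R ^ (D - t / θ)) := by
  have hR0 : 0 < R := by linarith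
  have hlogR : 0 < Real.log R := Real.log_pos hR
  set X := R ^ (-D) * S.toReal with hX
  rw [lt_div_iff_of_neg (neg_neg_of_pos hlogR)] at h
  have hX0 : X ≠ 0 := by
    intro h0
    rw [h0, Real.log_zero, mul_zero] at h
    nlinarith
  have hXpos : 0 < X := lt_of_le_of_ne (by positivity) (Ne.symm hX0)
  have hlogX : Real.log X < Real.log R * (-(t / θ)) := by
    refine lt_of_mul_lt_mul_left ?_ hθ.le
    rw [mul_comm (Real.log R), ← mul_assoc, mul_neg, mul_div_cancel₀ t hθ.ne']
    linarith
  have hXlt : X < R ^ (-(t / θ)) := by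
    rw [Real.rpow_def_of_pos hR0]
    exact (Real.log_lt_iff_lt_exp hXpos).1 hlogX
  -- `S = ⊤` would give the junk value `X = 0`, which `h` excludes.
  have hS : S ≠ ⊤ := by
    rintro rfl
    exact hX0 (by simp [hX])
  have hSX : S.toReal = R ^ D * X := by
    rw [hX, ← mul_assoc, ← Real.rpow_add hR0, add_neg_cancel, Real.rpow_zero, one_mul]
  rw [← ENNReal.ofReal_toReal hS, hSX, sub_eq_add_neg, Real.rpow_add hR0]
  gcongr

lemma norm_ftm_le {d : ℕ} (μ : Measure (Ed d)) [IsFiniteMeasure μ] (z : Ed d) :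
    ‖ftm μ z‖ ≤ μ.real univ := by
  simpa [ftm] using norm_integral_le_of_norm_le_const (μ := μ) (C := 1)
    (Eventually.of_forall fun x => by rw [Complex.norm_exp]; simp)

lemma setLIntegral_closedBall_ftm_rpow_le {d : ℕ} (μ : Measure (Ed d)) [IsFiniteMeasure μ]
    {p r : ℝ} (hp : 0 ≤ p) (hr : 0 ≤ r) :
    ∫⁻ z in closedBall 0 r, ENNReal.ofReal (‖ftm μ z‖ ^ p) ≤
      ENNReal.ofReal (μ.real univ ^ p) * volume (ball (0 : Ed d) 1) * ENNReal.ofReal (r ^ d) :=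
  calc ∫⁻ z in closedBall 0 r, ENNReal.ofReal (‖ftm μ z‖ ^ p)
      ≤ ∫⁻ _ in closedBall (0 : Ed d) r, ENNReal.ofReal (μ.real univ ^ p) :=
        lintegral_mono fun z => ENNReal.ofReal_le_ofReal
          (Real.rpow_le_rpow (norm_nonneg _) (norm_ftm_le μ z) hp)
    _ = _ := by
        rw [setLIntegral_const, Measure.addHaar_closedBall _ _ hr, finrank_euclideanSpace,
          Fintype.card_fin]
        ring

lemma energyJ_lt_top_of_setLIntegral_le {d : ℕ} (μ : Measure (Ed d)) [IsFiniteMeasure μ]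
    {θ s t R : ℝ} (hθ : 0 < θ) (hs : 0 < s) (hst : s < t) (hR : 0 < R)
    (h : ∀ r, R ≤ r → ∫⁻ z in {z : Ed d | ‖z‖ ≤ r}, ENNReal.ofReal (‖ftm μ z‖ ^ (2 / θ)) ≤
      ENNReal.ofReal (r ^ ((d : ℝ) - t / θ))) :
    energyJ μ s θ < ⊤ := by
  rw [energyJ, if_neg hθ.ne']
  refine ENNReal.rpow_lt_top_of_nonneg hθ.le (ne_of_lt ?_)
  simp_rw [ENNReal.ofReal_mul (Real.rpow_nonneg (norm_nonneg _) _)]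
  refine lintegral_mul_norm_rpow_lt_top (c₀ := d) (c₁ := d - t / θ) (C₁ := 1)
    (ENNReal.mul_ne_top ENNReal.ofReal_ne_top measure_ball_lt_top.ne) ENNReal.one_ne_top hR
    ?_ ?_ ENNReal.ofReal_ne_top
    (fun r hr _ => by
      simpa using setLIntegral_closedBall_ftm_rpow_le μ (by positivity) hr.le)
    (fun r hr => by simpa [closedBall, dist_eq_norm] using h r hr)
  · simpa using div_pos hs hθ
  · linarith [div_lt_div_of_pos_right hst hθ]

theorem statement10_general {d : ℕ} (μ : Measure (Ed d)) [IsFiniteMeasure μ]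
    (θ : ℝ) (hθ : θ ∈ Set.Ioc (0:ℝ) 1) :
    ENNReal.ofReal (lowerAvgFourierDim μ θ) ≤ dimF μ θ := by
  refine ENNReal.le_of_forall_nnreal_lt fun s hs => ?_
  rcases eq_or_ne s 0 with rfl | hs0
  · simp
  have hs_pos : (0 : ℝ) < s := NNReal.coe_pos.2 (pos_iff_ne_zero.2 hs0)
  obtain ⟨t, hst, htF⟩ := exists_between (ENNReal.coe_lt_ofReal.1 hs)
  have ht : 0 < t := hs_pos.trans hst
  obtain ⟨R, hR⟩ := eventually_atTop.1 (eventually_lt_of_nonneg_lt_liminf ht.le htF)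
  have h_ball : ∀ r, max R 2 ≤ r → ∫⁻ z in {z : Ed d | ‖z‖ ≤ r},
      ENNReal.ofReal (‖ftm μ z‖ ^ (2 / θ)) ≤ ENNReal.ofReal (r ^ ((d : ℝ) - t / θ)) :=
    fun r hr => le_ofReal_rpow_of_lt_mul_log_div_neg_log hθ.1 ht
      (one_lt_two.trans_le ((le_max_right _ _).trans hr)) (hR r ((le_max_left _ _).trans hr))
  exact le_iSup₂_of_le s (energyJ_lt_top_of_setLIntegral_le μ hθ.1
    hs_pos hst (by positivity) h_ball) le_rfl

/-- For a finite Borel measure `μ` on `ℝ^d` and `θ ∈ (0,1]`,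
`dim_F^θ μ ≥ F̲_μ(θ)`. -/
theorem statement10 {d : ℕ} (hd : 1 ≤ d) (μ : Measure (Ed d)) [IsFiniteMeasure μ]
    (θ : ℝ) (hθ : θ ∈ Set.Ioc (0:ℝ) 1) :
    ENNReal.ofReal (lowerAvgFourierDim μ θ) ≤ dimF μ θ :=
  statement10_general μ θ hθ

end
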